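/- Let μ, ν ∈ k and let A := k[x₁,x₂]/(x₁x₂ − μ·x₁³, x₂³ − ν·x₁³, x₁⁴). Then the socle Soc(A) = {a ∈ A : a·𝔪 = 0} (where 𝔪 is the maximal ideal of A generated by the classes of x₁ and x₂) is a one-dimensional k-vector space if and only if ν ≠ 0. -/

import Mathlib

set_option synthInstance.maxHeartbeats 1000000
set_option maxHeartbeats 1000000

open MvPolynomial

/-- The socle of a commutative ring `A` relative to an ideal `m`:
the ideal of all elements annihilating `m`. -/
def socleOf {A : Type*} [CommRing A] (m : Ideal A) : Ideal A where
  carrier := {a : A | ∀ b ∈ m, a * b = 0}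
  add_mem' := by intro a b ha hb c hc; rw [add_mul, ha c hc, hb c hc, add_zero]
  zero_mem' := by intro c hc; rw [zero_mul]
  smul_mem' := by intro r a ha c hc; rw [smul_eq_mul, mul_assoc, ha c hc, mul_zero]

/-- The ideal `(x₁x₂ - μ·x₁³, x₂³ - ν·x₁³, x₁⁴)` (with `x₁ = X 0`, `x₂ = X 1`). -/
noncomputable def muNuIdeal (k : Type*) [Field k] (μ ν : k) : Ideal (MvPolynomial (Fin 2) k) :=
  Ideal.span {X 0 * X 1 - C μ * X 0 ^ 3, X 1 ^ 3 - C ν * X 0 ^ 3, X 0 ^ 4}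

/-!
The functional `λ p = [x₁³]p + μ [x₁x₂]p + ν [x₂³]p` vanishes on the ideal (it is the Macaulay
dual generator of the algebra when `ν ≠ 0`). Modulo the ideal every polynomial reduces to a
combination `a` of `1, x₁, x₂, x₁², x₂², x₁³`. If `a` lies in the socle, then `λ (a x₁ q)` and
`λ (a x₂ q)` vanish for all `q`; the choices `q = x₁², x₁, 1` and `q = x₂, 1` kill every
coefficient of `a` except that of `x₁³`, provided `ν ≠ 0`: the coefficient of `x₂` is only
detected through `λ (a x₂²) = ν [x₂]a`. Since `λ x₁³ = 1`, the socle is then the line through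
`x₁³`. When `ν = 0`, also `x₂²` annihilates `𝔪`, and it is independent of `x₁³` because the
coefficient `[x₂²]` vanishes on the ideal as well.
-/

theorem mem_socleOf_span_pair {A : Type*} [CommRing A] {a u v : A} :
    a ∈ socleOf (Ideal.span {u, v}) ↔ a * u = 0 ∧ a * v = 0 := by
  refine ⟨fun h => ⟨h u (Ideal.subset_span (by simp)), h v (Ideal.subset_span (by simp))⟩, ?_⟩
  rintro ⟨hu, hv⟩ b hb
  obtain ⟨s, t, rfl⟩ := Ideal.mem_span_pair.mp hb
  linear_combination s * hu + t * hv

theorem smul_mk_eq_mk_C_mul {σ R : Type*} [CommRing R] (I : Ideal (MvPolynomial σ R)) (c : R)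
    (p : MvPolynomial σ R) : c • Ideal.Quotient.mk I p = Ideal.Quotient.mk I (C c * p) := by
  rw [C_mul']
  exact (map_smul (Ideal.Quotient.mkₐ R I) c p).symm

namespace muNuIdeal

variable {k : Type*} [Field k] {μ ν : k}

theorem mem_iff {p : MvPolynomial (Fin 2) k} :
    p ∈ muNuIdeal k μ ν ↔ ∃ a b c, a * (X 0 * X 1 - C μ * X 0 ^ 3) +
      b * (X 1 ^ 3 - C ν * X 0 ^ 3) + c * X 0 ^ 4 = p := by
  simp only [muNuIdeal, Ideal.mem_span_insert, Ideal.mem_span_singleton']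
  constructor
  · rintro ⟨a, z, ⟨b, w, ⟨c, rfl⟩, rfl⟩, rfl⟩
    exact ⟨a, b, c, by ring⟩
  · rintro ⟨a, b, c, rfl⟩
    exact ⟨a, _, ⟨b, _, ⟨c, rfl⟩, rfl⟩, by ring⟩

variable (k μ ν) in
noncomputable abbrev socle : Ideal (MvPolynomial (Fin 2) k ⧸ muNuIdeal k μ ν) :=
  socleOf (Ideal.span {Ideal.Quotient.mk _ (X 0), Ideal.Quotient.mk _ (X 1)})

theorem mk_mem_socle_iff {p : MvPolynomial (Fin 2) k} :
    Ideal.Quotient.mk _ p ∈ socle k μ ν ↔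
      p * X 0 ∈ muNuIdeal k μ ν ∧ p * X 1 ∈ muNuIdeal k μ ν := by
  simp only [mem_socleOf_span_pair, ← map_mul, Ideal.Quotient.eq_zero_iff_mem]

theorem mk_X_zero_pow_three_mem_socle : Ideal.Quotient.mk _ (X 0 ^ 3) ∈ socle k μ ν :=
  mk_mem_socle_iff.mpr
    ⟨mem_iff.mpr ⟨0, 0, 1, by ring⟩, mem_iff.mpr ⟨X 0 ^ 2, 0, C μ * X 0, by ring⟩⟩

theorem mk_X_one_sq_mem_socle : Ideal.Quotient.mk _ (X 1 ^ 2) ∈ socle k μ 0 :=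
  mk_mem_socle_iff.mpr
    ⟨mem_iff.mpr ⟨X 1 + C μ * X 0 ^ 2, 0, C μ ^ 2 * X 0, by ring⟩,
     mem_iff.mpr ⟨0, 1, 0, by simp only [map_zero]; ring⟩⟩

variable (μ ν) in
noncomputable def dualFunctional : MvPolynomial (Fin 2) k →ₗ[k] k :=
  lcoeff k (Finsupp.single 0 3) + μ • lcoeff k (Finsupp.single 0 1 + Finsupp.single 1 1) +
    ν • lcoeff k (Finsupp.single 1 3)

theorem dualFunctional_eq_zero_of_mem {p : MvPolynomial (Fin 2) k} (hp : p ∈ muNuIdeal k μ ν) :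
    dualFunctional μ ν p = 0 := by
  obtain ⟨a, b, c, rfl⟩ := mem_iff.mp hp
  simp [dualFunctional, mul_sub, ← mul_assoc, coeff_mul_X', X_pow_eq_monomial,
    coeff_mul_monomial', Finsupp.le_def, Fin.forall_fin_two, C_mul', coeff_smul]

theorem coeff_X_one_sq_eq_zero_of_mem {p : MvPolynomial (Fin 2) k} (hp : p ∈ muNuIdeal k μ ν) :
    coeff (Finsupp.single 1 2) p = 0 := by
  obtain ⟨a, b, c, rfl⟩ := mem_iff.mp hp
  simp [mul_sub, ← mul_assoc, coeff_mul_X', X_pow_eq_monomial,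
    coeff_mul_monomial', Finsupp.le_def, Fin.forall_fin_two, C_mul', coeff_smul]

theorem X_zero_pow_three_notMem : (X 0 ^ 3 : MvPolynomial (Fin 2) k) ∉ muNuIdeal k μ ν := by
  intro h
  simpa [dualFunctional, X_pow_eq_monomial, coeff_monomial, Finsupp.ext_iff, Fin.forall_fin_two]
    using dualFunctional_eq_zero_of_mem h

theorem linearIndependent_mk_X_zero_pow_three_mk_X_one_sq :
    LinearIndependent k ![Ideal.Quotient.mk (muNuIdeal k μ ν) (X 0 ^ 3),
      Ideal.Quotient.mk _ (X 1 ^ 2)] := by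
  refine LinearIndependent.pair_iff.mpr fun s t hst => ?_
  rw [smul_mk_eq_mk_C_mul, smul_mk_eq_mk_C_mul, ← map_add, Ideal.Quotient.eq_zero_iff_mem] at hst
  have hs := dualFunctional_eq_zero_of_mem hst
  have ht := coeff_X_one_sq_eq_zero_of_mem hst
  simpa [dualFunctional, X, C_mul_monomial, monomial_pow, coeff_monomial, Finsupp.ext_iff,
    Fin.forall_fin_two] using And.intro hs ht

theorem finrank_socle_ne_one : Module.finrank k ((socle k μ 0).restrictScalars k) ≠ 1 := by
  intro h
  have := Module.finite_of_finrank_eq_succ h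
  have hle : Submodule.span k (Set.range ![Ideal.Quotient.mk (muNuIdeal k μ 0) (X 0 ^ 3),
      Ideal.Quotient.mk _ (X 1 ^ 2)]) ≤ (socle k μ 0).restrictScalars k := by
    rw [Submodule.span_le, Set.range_subset_iff]
    intro i
    fin_cases i
    exacts [mk_X_zero_pow_three_mem_socle, mk_X_one_sq_mem_socle]
  have := Submodule.finrank_mono hle
  rw [finrank_span_eq_card linearIndependent_mk_X_zero_pow_three_mk_X_one_sq, h] at this
  simp at this

noncomputable def normalForm (c₀ c₁ c₂ c₃ c₄ c₅ : k) : MvPolynomial (Fin 2) k :=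
  C c₀ + C c₁ * X 0 + C c₂ * X 1 + C c₃ * X 0 ^ 2 + C c₄ * X 1 ^ 2 + C c₅ * X 0 ^ 3

theorem exists_sub_normalForm_mem (p : MvPolynomial (Fin 2) k) :
    ∃ c₀ c₁ c₂ c₃ c₄ c₅, p - normalForm c₀ c₁ c₂ c₃ c₄ c₅ ∈ muNuIdeal k μ ν := by
  induction p using MvPolynomial.induction_on with
  | C a => exact ⟨a, 0, 0, 0, 0, 0, by simp [normalForm]⟩
  | add p q hp hq =>
    obtain ⟨c₀, c₁, c₂, c₃, c₄, c₅, hc⟩ := hp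
    obtain ⟨d₀, d₁, d₂, d₃, d₄, d₅, hd⟩ := hq
    refine ⟨c₀ + d₀, c₁ + d₁, c₂ + d₂, c₃ + d₃, c₄ + d₄, c₅ + d₅, ?_⟩
    convert add_mem hc hd using 1
    simp only [normalForm, map_add]
    ring
  | mul_X p i hp =>
    obtain ⟨c₀, c₁, c₂, c₃, c₄, c₅, hc⟩ := hp
    have split : ∀ q, p * X i - q = (p - normalForm c₀ c₁ c₂ c₃ c₄ c₅) * X i +
        (normalForm c₀ c₁ c₂ c₃ c₄ c₅ * X i - q) := fun q => by ring
    match i with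
    | 0 =>
      refine ⟨0, c₀, 0, c₁, 0, c₃ + μ * c₂, ?_⟩
      rw [split]
      refine add_mem (Ideal.mul_mem_right _ _ hc) (mem_iff.mpr
        ⟨C c₂ + C c₄ * (X 1 + C μ * X 0 ^ 2), 0, C c₅ + C c₄ * C μ ^ 2 * X 0, ?_⟩)
      simp only [normalForm, map_add, map_mul, map_zero]
      ring
    | 1 =>
      refine ⟨0, 0, c₀, 0, c₂, μ * c₁ + ν * c₄, ?_⟩
      rw [split]
      refine add_mem (Ideal.mul_mem_right _ _ hc) (mem_iff.mpr
        ⟨C c₁ + C c₃ * X 0 + C c₅ * X 0 ^ 2, C c₄, C c₃ * C μ + C c₅ * C μ * X 0, ?_⟩)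
      simp only [normalForm, map_add, map_mul, map_zero]
      ring

theorem normalForm_eq_of_mul_X_mem (hν : ν ≠ 0) {c₀ c₁ c₂ c₃ c₄ c₅ : k}
    (hx : normalForm c₀ c₁ c₂ c₃ c₄ c₅ * X 0 ∈ muNuIdeal k μ ν)
    (hy : normalForm c₀ c₁ c₂ c₃ c₄ c₅ * X 1 ∈ muNuIdeal k μ ν) :
    normalForm c₀ c₁ c₂ c₃ c₄ c₅ = C c₅ * X 0 ^ 3 := by
  have hx' := fun q => dualFunctional_eq_zero_of_mem (Ideal.mul_mem_right q _ hx)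
  have hy' := fun q => dualFunctional_eq_zero_of_mem (Ideal.mul_mem_right q _ hy)
  have e₀ := hx' (X 0 ^ 2)
  have e₁ := hx' (X 0)
  have e₂ := hx' 1
  have e₃ := hy' (X 1)
  have e₄ := hy' 1
  obtain ⟨h₀, h₁, h₂, h₃, h₄⟩ :
      c₀ = 0 ∧ c₁ = 0 ∧ c₃ + μ * c₂ = 0 ∧ ν * c₂ = 0 ∧ μ * c₁ + ν * c₄ = 0 := by
    simpa [normalForm, dualFunctional, add_mul, X, C_mul_monomial, monomial_mul, monomial_pow,
      coeff_monomial, Finsupp.ext_iff, Fin.forall_fin_two] using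
      And.intro e₀ (And.intro e₁ (And.intro e₂ (And.intro e₃ e₄)))
  have hc₂ : c₂ = 0 := (mul_eq_zero.mp h₃).resolve_left hν
  have hc₃ : c₃ = 0 := by simpa [hc₂] using h₂
  have hc₄ : c₄ = 0 := by simpa [h₁, hν] using h₄
  simp [normalForm, h₀, h₁, hc₂, hc₃, hc₄]

theorem socle_eq_span_mk_X_zero_pow_three (hν : ν ≠ 0) :
    (socle k μ ν).restrictScalars k = k ∙ Ideal.Quotient.mk _ (X 0 ^ 3) := by
  refine le_antisymm (fun a ha => ?_)
    ((Submodule.span_singleton_le_iff_mem _ _).mpr mk_X_zero_pow_three_mem_socle)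
  obtain ⟨p, rfl⟩ := Ideal.Quotient.mk_surjective a
  obtain ⟨c₀, c₁, c₂, c₃, c₄, c₅, hp⟩ := exists_sub_normalForm_mem (μ := μ) (ν := ν) p
  rw [Ideal.Quotient.eq.mpr hp] at ha ⊢
  obtain ⟨hx, hy⟩ := mk_mem_socle_iff.mp ha
  rw [normalForm_eq_of_mul_X_mem hν hx hy]
  exact Submodule.mem_span_singleton.mpr ⟨c₅, smul_mk_eq_mk_C_mul _ _ _⟩

end muNuIdeal

theorem socle_one_dimensional_iff_nu_ne_zero_general
    (k : Type*) [Field k] (μ ν : k) :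
    Module.finrank k
        ((socleOf (Ideal.span
          {Ideal.Quotient.mk (muNuIdeal k μ ν) (X 0),
           Ideal.Quotient.mk (muNuIdeal k μ ν) (X 1)})).restrictScalars k) = 1 ↔
      ν ≠ 0 := by
  refine ⟨fun h hν => ?_, fun hν => ?_⟩
  · subst hν
    exact muNuIdeal.finrank_socle_ne_one h
  · rw [muNuIdeal.socle_eq_span_mk_X_zero_pow_three hν]
    exact finrank_span_singleton
      (mt Ideal.Quotient.eq_zero_iff_mem.mp muNuIdeal.X_zero_pow_three_notMem)

/-- Let `μ, ν ∈ k` and `A := k[x₁,x₂]/(x₁x₂ - μ·x₁³, x₂³ - ν·x₁³, x₁⁴)`,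
a local Artinian `k`-algebra whose maximal ideal `𝔪` is generated by the classes of `x₁`
and `x₂`.  Then the socle `Soc(A) = {a ∈ A : a·𝔪 = 0}` is a one-dimensional `k`-vector
space if and only if `ν ≠ 0`. -/
theorem socle_one_dimensional_iff_nu_ne_zero
    (k : Type*) [Field k] [IsAlgClosed k]
    (hchar2 : (2 : k) ≠ 0) (hchar3 : (3 : k) ≠ 0) (μ ν : k) :
    Module.finrank k
        ((socleOf (Ideal.span
          {Ideal.Quotient.mk (muNuIdeal k μ ν) (X 0),
           Ideal.Quotient.mk (muNuIdeal k μ ν) (X 1)})).restrictScalars k) = 1 ↔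
      ν ≠ 0 :=
  socle_one_dimensional_iff_nu_ne_zero_general k μ ν
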